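/- Order preservation of Tonks' vertex map: the map φ : S_n → Y_n is order-preserving from the (right) weak Bruhat order on S_n to the Tamari order on Y_n; that is, if π ≤_B ρ then φ(π) ≤_T φ(ρ). -/

import Mathlib

/-- Indexed terms of the language `L^I`: generators `2^k` and partial compositions. -/
inductive Trm : Type
  | gen : ℕ → Trm
  | comp : Trm → ℕ → Trm → Trm
deriving DecidableEq

namespace Trm

/-- Arity `|A|`. -/
def arity : Trm → ℕ
  | gen _ => 2
  | comp A _ B => A.arity + B.arity - 1

/-- Set of indices occurring in a term. -/
def ind : Trm → Finset ℕ
  | gen k => {k}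
  | comp A _ B => A.ind ∪ B.ind

/-- Root index. -/
def root : Trm → ℕ
  | gen k => k
  | comp A _ _ => A.root

/-- Number of occurrences of the generator. -/
def countGen : Trm → ℕ
  | gen _ => 1
  | comp A _ B => A.countGen + B.countGen

end Trm

/-- The congruence `=_I` generated by (assoc1) and (assoc2). -/
inductive IEq : Trm → Trm → Prop
  | refl (A : Trm) : IEq A A
  | symm {A B} : IEq A B → IEq B A
  | trans {A B C} : IEq A B → IEq B C → IEq A C
  | congr {A A' B B'} (n : ℕ) : IEq A A' → IEq B B' →
      IEq (Trm.comp A n B) (Trm.comp A' n B')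
  | assoc1 (A B C : Trm) (n m : ℕ) : n ≤ m → m < n + B.arity →
      IEq (Trm.comp (Trm.comp A n B) m C) (Trm.comp A n (Trm.comp B (m - n + 1) C))
  | assoc2 (A B C : Trm) (n m : ℕ) : n + B.arity ≤ m →
      IEq (Trm.comp (Trm.comp A n B) m C) (Trm.comp (Trm.comp A (m - B.arity + 1) C) n B)

/-- Planar binary trees. -/
inductive BT : Type
  | leaf : BT
  | node : BT → BT → BT
deriving DecidableEq

namespace BT

/-- Number of leaves. -/
def leaves : BT → ℕ
  | leaf => 1
  | node l r => l.leaves + r.leaves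

/-- Graft `S` at the `i`-th leaf (1-indexed) of a tree. -/
def graft : BT → ℕ → BT → BT
  | leaf, _, S => S
  | node l r, i, S =>
    if i ≤ l.leaves then node (l.graft i S) r else node l (r.graft (i - l.leaves) S)

end BT

/-- Evaluation `ε` of indexed terms to planar binary trees. -/
def Trm.eval : Trm → BT
  | Trm.gen _ => BT.node BT.leaf BT.leaf
  | Trm.comp A i B => A.eval.graft i B.eval

/-- `l`-factors. -/
inductive LFactor : Trm → Prop
  | gen (k : ℕ) : LFactor (Trm.gen k)
  | step {A : Trm} (j : ℕ) : LFactor A → j ∉ A.ind →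
      LFactor (Trm.comp A ((A.ind.filter (· < j)).card + 1) (Trm.gen j))

/-- Auxiliary for the head-insertion encoding: `done` is the list of already
inserted letters. -/
def hAux : Trm → List ℕ → List ℕ → Trm
  | A, _, [] => A
  | A, done, y :: rest =>
      hAux (Trm.comp A ((done.filter (· < y)).length + 1) (Trm.gen y)) (done ++ [y]) rest

/-- Head-insertion encoding `h` (junk value on the empty word). -/
def hWord : List ℕ → Trm
  | [] => Trm.gen 0
  | x :: rest => hAux (Trm.gen x) [x] rest

/-- `u_a(x)`: number of letters to the left of `x` in `a` that are greater than `x`. -/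
def uCount (a : List ℕ) (x : ℕ) : ℕ := ((a.takeWhile (· ≠ x)).filter (x < ·)).length

/-- Decreasing rearrangement of a word. -/
def sortDesc (a : List ℕ) : List ℕ := (a.mergeSort (· ≤ ·)).reverse

/-- Decreasing encoding `f` (junk value on the empty word). -/
def fWord (a : List ℕ) : Trm :=
  match sortDesc a with
  | [] => Trm.gen 0
  | k :: rest => rest.foldl (fun A x => Trm.comp A (uCount a x + 1) (Trm.gen x)) (Trm.gen k)

/-- Standardization of a word of distinct integers. -/
def std (a : List ℕ) : List ℕ := a.map (fun x => (a.filter (· ≤ x)).length)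

/-- Tonks' vertex map, splitting form `φ`. -/
def tonksPhi (a : List ℕ) : BT :=
  match ha : a.getLast? with
  | none => BT.leaf
  | some x =>
      BT.node (tonksPhi (std (a.filter (· < x)))) (tonksPhi (std (a.filter (x < ·))))
termination_by a.length
decreasing_by
  · have hx : x ∈ a := List.mem_of_mem_getLast? (Option.mem_def.mpr ha)
    simp only [std, List.length_map, List.length_unattach]
    exact lt_of_lt_of_eq (List.length_filter_lt_length_iff_exists.2
      ⟨⟨x, hx⟩, List.mem_attach _ _, by simp⟩) List.length_attach
  · have hx : x ∈ a := List.mem_of_mem_getLast? (Option.mem_def.mpr ha)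
    simp only [std, List.length_map, List.length_unattach]
    exact lt_of_lt_of_eq (List.length_filter_lt_length_iff_exists.2
      ⟨⟨x, hx⟩, List.mem_attach _ _, by simp⟩) List.length_attach

/-- Tonks' vertex map, head-grafting form `φ̂`. -/
def phiHat : List ℕ → BT
  | [] => BT.leaf
  | x :: rest => (phiHat (std rest)).graft x (BT.node BT.leaf BT.leaf)
termination_by a => a.length
decreasing_by
  simp [std]

/-- The Loday–Ronco map `ψ`. -/
def lodayPsi (a : List ℕ) : BT :=
  match hm : a.maximum with
  | none => BT.leaf
  | some m =>
      let i := a.idxOf m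
      BT.node (lodayPsi (std (a.take i))) (lodayPsi (std (a.drop (i + 1))))
termination_by a.length
decreasing_by
  · have hmem : m ∈ a := List.maximum_mem hm
    have hi : a.idxOf m < a.length := List.idxOf_lt_length_iff.2 hmem
    simp only [std, List.length_map, List.length_take]
    omega
  · have : a ≠ [] := by rintro rfl; simp [List.maximum] at hm
    have : 0 < a.length := List.length_pos_iff.2 this
    simp only [std, List.length_map, List.length_drop]
    omega

/-- Inverse of a permutation word on `{1,…,n}`. -/
def invWord (π : List ℕ) : List ℕ :=
  (List.range π.length).map (fun j => π.idxOf (j + 1) + 1)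

/-- One Tamari (right rotation) step, at any subtree. -/
inductive TamariStep : BT → BT → Prop
  | rot (X Y Z : BT) : TamariStep (BT.node (BT.node X Y) Z) (BT.node X (BT.node Y Z))
  | left {l l'} (r : BT) : TamariStep l l' → TamariStep (BT.node l r) (BT.node l' r)
  | right (l : BT) {r r'} : TamariStep r r' → TamariStep (BT.node l r) (BT.node l r')

/-- The Tamari order. -/
def TamariLE : BT → BT → Prop := Relation.ReflTransGen TamariStep

/-- The strict Tamari order. -/
def TamariLT : BT → BT → Prop := Relation.TransGen TamariStep

/-- One cover of the right weak Bruhat order on words. -/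
inductive BruhatStep : List ℕ → List ℕ → Prop
  | swap (α : List ℕ) {u v : ℕ} (β : List ℕ) : u < v →
      BruhatStep (α ++ u :: v :: β) (α ++ v :: u :: β)

/-- The right weak Bruhat order on words. -/
def BruhatLE : List ℕ → List ℕ → Prop := Relation.ReflTransGen BruhatStep

/-- Head-insertion index `k(a; σ)`. -/
def kIdx (a : ℕ) (σ : List ℕ) : ℕ := 1 + (σ.filter (· < a)).length

/-! The root of `φ(π)` splits `π` at its last letter `x`. Since `φ` is invariant under
order-preserving relabelling, the two subtrees are `φ` of the subwords of letters below and above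
`x`, with no standardization needed. Swapping an ascent `u v` that is not at the end of `π` is
therefore a swap inside one of these subwords (or changes neither), so induction on the length
applies; swapping the last two letters is exactly one right rotation at the root. -/

lemma List.filter_map_lt_of_strictMonoOn {α β : Type*} [LinearOrder α] [LinearOrder β]
    {g : α → β} {a : List α} (hg : StrictMonoOn g {x | x ∈ a}) {x : α} (hx : x ∈ a) :
    (a.map g).filter (· < g x) = (a.filter (· < x)).map g := by
  rw [List.filter_map]
  congr 1
  refine List.filter_congr fun z hz => ?_
  simp [hg.lt_iff_lt hz hx]

lemma List.filter_map_gt_of_strictMonoOn {α β : Type*} [LinearOrder α] [LinearOrder β]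
    {g : α → β} {a : List α} (hg : StrictMonoOn g {x | x ∈ a}) {x : α} (hx : x ∈ a) :
    (a.map g).filter (g x < ·) = (a.filter (x < ·)).map g := by
  rw [List.filter_map]
  congr 1
  refine List.filter_congr fun z hz => ?_
  simp [hg.lt_iff_lt hx hz]

lemma strictMonoOn_length_filter_le {α : Type*} [LinearOrder α] (a : List α) :
    StrictMonoOn (fun x => (a.filter (· ≤ x)).length) {x | x ∈ a} := by
  intro x _ y (hy : y ∈ a) hxy
  have hsub : (a.filter (· ≤ y)).filter (· ≤ x) = a.filter (· ≤ x) := by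
    rw [List.filter_filter]
    refine List.filter_congr fun z _ => ?_
    simpa using fun hzx => hzx.trans hxy.le
  simp only [← hsub]
  exact List.length_filter_lt_length_iff_exists.2 ⟨y, by simp [hy], by simpa using hxy⟩

lemma std_map_of_strictMonoOn {g : ℕ → ℕ} {a : List ℕ} (hg : StrictMonoOn g {x | x ∈ a}) :
    std (a.map g) = std a := by
  simp only [std, List.map_map]
  refine List.map_congr_left fun x hx => ?_
  simp only [Function.comp_apply, List.filter_map, List.length_map]
  congr 1
  refine List.filter_congr fun z hz => ?_
  simp [hg.le_iff_le hz hx]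

lemma tonksPhi_append_singleton_eq_node_std (w : List ℕ) (x : ℕ) :
    tonksPhi (w ++ [x]) =
      BT.node (tonksPhi (std ((w ++ [x]).filter (· < x))))
        (tonksPhi (std ((w ++ [x]).filter (x < ·)))) := by
  rw [tonksPhi]
  split
  · next h => simp at h
  · next y h =>
      obtain rfl : x = y := by simpa using h
      rfl

lemma tonksPhi_map_of_strictMonoOn {g : ℕ → ℕ} {a : List ℕ} (hg : StrictMonoOn g {x | x ∈ a}) :
    tonksPhi (a.map g) = tonksPhi a := by
  obtain rfl | ⟨w, x, rfl⟩ := a.eq_nil_or_concat'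
  · rfl
  have hx : x ∈ w ++ [x] := by simp
  have hmono (p : ℕ → Bool) : StrictMonoOn g {z | z ∈ (w ++ [x]).filter p} :=
    hg.mono fun z hz => List.mem_of_mem_filter hz
  have hmap : (w ++ [x]).map g = w.map g ++ [g x] := List.map_append
  rw [hmap, tonksPhi_append_singleton_eq_node_std, ← hmap,
    List.filter_map_lt_of_strictMonoOn hg hx, List.filter_map_gt_of_strictMonoOn hg hx,
    std_map_of_strictMonoOn (hmono _), std_map_of_strictMonoOn (hmono _),
    tonksPhi_append_singleton_eq_node_std]

lemma tonksPhi_std (a : List ℕ) : tonksPhi (std a) = tonksPhi a :=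
  tonksPhi_map_of_strictMonoOn (strictMonoOn_length_filter_le a)

lemma tonksPhi_append_singleton (w : List ℕ) (x : ℕ) :
    tonksPhi (w ++ [x]) =
      BT.node (tonksPhi (w.filter (· < x))) (tonksPhi (w.filter (x < ·))) := by
  rw [tonksPhi_append_singleton_eq_node_std, tonksPhi_std, tonksPhi_std]
  simp

lemma TamariLE.node {l l' r r' : BT} (hl : TamariLE l l') (hr : TamariLE r r') :
    TamariLE (BT.node l r) (BT.node l' r') :=
  (hl.lift (BT.node · r) fun _ _ => TamariStep.left r).trans
    (hr.lift (BT.node l' ·) fun _ _ => TamariStep.right l')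

lemma tamariLE_tonksPhi_swap_last {u v : ℕ} (α : List ℕ) (huv : u < v) :
    TamariLE (tonksPhi (α ++ [u, v])) (tonksPhi (α ++ [v, u])) := by
  have hX : (α.filter (· < v)).filter (· < u) = α.filter (· < u) := by
    rw [List.filter_filter]
    refine List.filter_congr fun z _ => ?_
    simpa using fun hzu => hzu.trans huv
  have hY : (α.filter (· < v)).filter (u < ·) = (α.filter (u < ·)).filter (· < v) := by
    simp only [List.filter_filter, Bool.and_comm]
  have hZ : (α.filter (u < ·)).filter (v < ·) = α.filter (v < ·) := by
    rw [List.filter_filter]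
    refine List.filter_congr fun z _ => ?_
    simpa using fun hvz => huv.trans hvz
  -- With `A, B, C` the letters of `α` below `u`, between `u` and `v`, and above `v`, the two sides
  -- are `((φ A, φ B), φ C)` and `(φ A, (φ B, φ C))`.
  have hu : ¬ v < u := huv.not_gt
  have huv' : α ++ [u, v] = α ++ [u] ++ [v] := by simp
  have hvu : α ++ [v, u] = α ++ [v] ++ [u] := by simp
  rw [huv', hvu, tonksPhi_append_singleton, tonksPhi_append_singleton]
  simp only [List.filter_append, List.filter_singleton, huv, hu, decide_true, decide_false,
    cond_true, cond_false, List.append_nil]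
  rw [tonksPhi_append_singleton, tonksPhi_append_singleton, hX, hY, hZ]
  exact Relation.ReflTransGen.single (TamariStep.rot _ _ _)

lemma BruhatStep.filter {a b : List ℕ} (h : BruhatStep a b) (p : ℕ → Bool) :
    a.filter p = b.filter p ∨ BruhatStep (a.filter p) (b.filter p) := by
  obtain @⟨α, u, v, β, huv⟩ := h
  by_cases hp : p u ∧ p v
  · exact .inr (by simpa [hp.1, hp.2] using BruhatStep.swap _ _ huv)
  · left
    rcases not_and_or.1 hp with h | h <;> simp [List.filter_cons, h]

lemma BruhatStep.eq_swap_last_or_append_singleton {a b : List ℕ} (h : BruhatStep a b) :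
    (∃ α u v, u < v ∧ a = α ++ [u, v] ∧ b = α ++ [v, u]) ∨
      ∃ w w' x, BruhatStep w w' ∧ a = w ++ [x] ∧ b = w' ++ [x] := by
  obtain @⟨α, u, v, β, huv⟩ := h
  obtain rfl | ⟨β, x, rfl⟩ := β.eq_nil_or_concat'
  · exact .inl ⟨α, u, v, huv, rfl, rfl⟩
  · exact .inr ⟨_, _, x, .swap α β huv, by simp, by simp⟩

theorem tamariLE_tonksPhi_of_bruhatStep {a b : List ℕ} (h : BruhatStep a b) :
    TamariLE (tonksPhi a) (tonksPhi b) := by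
  induction hn : a.length using Nat.strong_induction_on generalizing a b with
  | _ n ih =>
  rcases h.eq_swap_last_or_append_singleton with
    ⟨α, u, v, huv, rfl, rfl⟩ | ⟨w, w', x, hw, rfl, rfl⟩
  · exact tamariLE_tonksPhi_swap_last α huv
  have hchild (p : ℕ → Bool) : TamariLE (tonksPhi (w.filter p)) (tonksPhi (w'.filter p)) := by
    rcases hw.filter p with heq | hstep
    · exact heq ▸ .refl
    · have hlen := List.length_filter_le p w
      exact ih _ (by simp only [List.length_append, List.length_singleton] at hn; omega) hstep rfl
  rw [tonksPhi_append_singleton, tonksPhi_append_singleton]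
  exact (hchild _).node (hchild _)

theorem tonksPhi_order_preserving_general (π ρ : List ℕ) (h : BruhatLE π ρ) :
    TamariLE (tonksPhi π) (tonksPhi ρ) := by
  induction h with
  | refl => exact .refl
  | tail _ hstep ih => exact ih.trans (tamariLE_tonksPhi_of_bruhatStep hstep)

theorem tonksPhi_order_preserving (n : ℕ) (π ρ : List ℕ)
    (hperm : π.Perm (List.range' 1 n)) (h : BruhatLE π ρ) :
    TamariLE (tonksPhi π) (tonksPhi ρ) :=
  tonksPhi_order_preserving_general π ρ h
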